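/- Let (C_·, φ) be an S¹-complex of modules over a commutative ring with C_n = 0 for all n < n_0 for some integer n_0, and suppose H_n(C, φ_0) = 0 for all n. Then H_n(C̃, ∂̃) = 0 for all n. -/

import Mathlib

/-- Cast along an equality of degrees. -/
def gcast (R : Type) [CommRing R] (C : ℤ → Type) [∀ n, AddCommGroup (C n)]
    [∀ n, Module R (C n)] {m n : ℤ} (h : m = n) : C m →ₗ[R] C n where
  toFun x := h ▸ x
  map_add' x y := by subst h; rfl
  map_smul' r x := by subst h; rfl

/-- An `S¹`-structure on a `ℤ`-graded module: maps `φ i` of degree `2*i - 1`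
satisfying `∑_{i+j=k} φ i ∘ φ j = 0` for all `k`. -/
def IsSOneStructure (R : Type) [CommRing R] (C : ℤ → Type) [∀ n, AddCommGroup (C n)]
    [∀ n, Module R (C n)]
    (φ : ∀ (i : ℕ) (n : ℤ), C n →ₗ[R] C (n + (2 * (i : ℤ) - 1))) : Prop :=
  ∀ (k : ℕ) (n : ℤ),
    ∑ i ∈ (Finset.range (k + 1)).attach,
      (gcast R C (show n + (2 * ((k - i.1 : ℕ) : ℤ) - 1) + (2 * (i.1 : ℤ) - 1)
            = n + 2 * (k : ℤ) - 2 by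
          have := Finset.mem_range.mp i.2; omega)).comp
        ((φ i.1 (n + (2 * ((k - i.1 : ℕ) : ℤ) - 1))).comp (φ (k - i.1) n)) = 0

/-- The degree-`n` part of `R[u] ⊗ C` with `|u| = 2`. -/
abbrev Tilde (C : ℤ → Type) [∀ n, AddCommGroup (C n)] (n : ℤ) : Type :=
  Π₀ ℓ : ℕ, C (n - 2 * (ℓ : ℤ))

/-- The equivariant differential `∂̃(u^ℓ ⊗ x) = ∑_{j ≤ ℓ} u^{ℓ-j} ⊗ φ j x`. -/
noncomputable def tildeD (R : Type) [CommRing R] (C : ℤ → Type) [∀ n, AddCommGroup (C n)]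
    [∀ n, Module R (C n)]
    (φ : ∀ (i : ℕ) (n : ℤ), C n →ₗ[R] C (n + (2 * (i : ℤ) - 1))) (n : ℤ) :
    Tilde C n →ₗ[R] Tilde C (n - 1) :=
  DFinsupp.lsum ℕ fun ℓ =>
    ∑ j ∈ (Finset.range (ℓ + 1)).attach,
      (DFinsupp.lsingle (ℓ - j.1)).comp
        ((gcast R C (show n - 2 * (ℓ : ℤ) + (2 * (j.1 : ℤ) - 1)
              = n - 1 - 2 * ((ℓ - j.1 : ℕ) : ℤ) by
            have := Finset.mem_range.mp j.2; omega)).comp (φ j.1 (n - 2 * (ℓ : ℤ))))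

/-!
Filter `C̃ = R[u] ⊗ C` by the power of `u`. Only the `φ 0` part of `∂̃` preserves the power of
`u`, so the top coefficient `x_L` of a cycle `x = ∑_{ℓ ≤ L} u^ℓ ⊗ x_ℓ` is a `φ 0`-cycle, hence
`x_L = φ 0 y`. Then `x - ∂̃ (u^L ⊗ y)` is a cycle with smaller top power of `u`, and induction on
`L` shows that `x` is a boundary. That `∂̃ ∘ ∂̃ = 0` is the `S¹`-relation `∑_{i+j=k} φ i ∘ φ j = 0`
read off coefficientwise.
-/

open Finset

/-- `H_*(C, φ 0) = 0`. -/
def PhiZeroExact (R : Type) [CommRing R] (C : ℤ → Type) [∀ n, AddCommGroup (C n)]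
    [∀ n, Module R (C n)]
    (φ : ∀ (i : ℕ) (n : ℤ), C n →ₗ[R] C (n + (2 * (i : ℤ) - 1))) : Prop :=
  ∀ (n : ℤ) (x : C n), φ 0 n x = 0 →
    ∃ y : C (n + 1),
      gcast R C (show n + 1 + (2 * ((0 : ℕ) : ℤ) - 1) = n by push_cast; ring)
        (φ 0 (n + 1) y) = x

/-- The element `u^m ⊗ x` of `C̃_N`; it is junk `0` unless `x` has degree `N - 2m`. Letting the
degree of `x` float frees sums of such elements from the casts in the definition of `tildeD`. -/
noncomputable def tildeSingle (R : Type) [CommRing R] (C : ℤ → Type) [∀ n, AddCommGroup (C n)]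
    [∀ n, Module R (C n)] (N : ℤ) (m : ℕ) {a : ℤ} : C a →ₗ[R] Tilde C N :=
  if h : a = N - 2 * (m : ℤ) then (DFinsupp.lsingle m).comp (gcast R C h) else 0

section

variable {R : Type} [CommRing R] {C : ℤ → Type} [∀ n, AddCommGroup (C n)] [∀ n, Module R (C n)]

theorem gcast_gcast {a b c : ℤ} (h₁ : a = b) (h₂ : b = c) (x : C a) :
    gcast R C h₂ (gcast R C h₁ x) = gcast R C (h₁.trans h₂) x := by
  subst h₁ h₂; rfl

theorem gcast_eq_zero_iff {a b : ℤ} (h : a = b) {x : C a} : gcast R C h x = 0 ↔ x = 0 := by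
  subst h; rfl

theorem tildeSingle_of_eq {N a : ℤ} {m : ℕ} (h : a = N - 2 * (m : ℤ)) (x : C a) :
    tildeSingle R C N m x = DFinsupp.single m (gcast R C h x) := by
  rw [tildeSingle, dif_pos h]; rfl

theorem tildeSingle_of_ne {N a : ℤ} {m : ℕ} (h : a ≠ N - 2 * (m : ℤ)) (x : C a) :
    tildeSingle R C N m x = 0 := by
  rw [tildeSingle, dif_neg h]; rfl

theorem tildeSingle_self {N : ℤ} {m : ℕ} (x : C (N - 2 * (m : ℤ))) :
    tildeSingle R C N m x = DFinsupp.single m x :=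
  tildeSingle_of_eq rfl x

theorem tildeSingle_gcast {N a b : ℤ} {m : ℕ} (h : a = b) (x : C a) :
    tildeSingle R C N m (gcast R C h x) = tildeSingle R C N m x := by
  subst h; rfl

theorem tildeSingle_apply_self {N a : ℤ} {m : ℕ} (h : a = N - 2 * (m : ℤ)) (x : C a) :
    tildeSingle R C N m x m = gcast R C h x := by
  rw [tildeSingle_of_eq h, DFinsupp.single_eq_same]

theorem tildeSingle_apply_of_ne {N a : ℤ} {m ℓ : ℕ} (h : ℓ ≠ m) (x : C a) :
    tildeSingle R C N m x ℓ = 0 := by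
  by_cases ha : a = N - 2 * (m : ℤ)
  · rw [tildeSingle_of_eq ha, DFinsupp.single_eq_of_ne h]
  · rw [tildeSingle_of_ne ha, DFinsupp.zero_apply]

variable {φ : ∀ (i : ℕ) (n : ℤ), C n →ₗ[R] C (n + (2 * (i : ℤ) - 1))}

theorem gcast_tildeD {a b : ℤ} (h : a = b) (h' : a - 1 = b - 1) (x : Tilde C a) :
    tildeD R C φ b (gcast R (fun m => Tilde C m) h x)
      = gcast R (fun m => Tilde C m) h' (tildeD R C φ a x) := by
  subst h; rfl

theorem tildeD_tildeSingle (N : ℤ) (m : ℕ) {a : ℤ} (x : C a) :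
    tildeD R C φ N (tildeSingle R C N m x)
      = ∑ i ∈ range (m + 1), tildeSingle R C (N - 1) (m - i) (φ i a x) := by
  by_cases ha : a = N - 2 * (m : ℤ)
  · subst ha
    rw [tildeSingle_self, tildeD, DFinsupp.lsum_single, LinearMap.sum_apply,
      ← sum_attach (range (m + 1)) fun i => tildeSingle R C (N - 1) (m - i) (φ i _ x)]
    refine sum_congr rfl fun i _ => ?_
    rw [tildeSingle_of_eq (by have := mem_range.mp i.2; omega)]
    rfl
  · rw [tildeSingle_of_ne ha, map_zero]
    refine (sum_eq_zero fun i hi => tildeSingle_of_ne ?_ _).symm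
    have := mem_range.mp hi
    omega

theorem sum_tildeSingle_phi_comp_phi (hφ : IsSOneStructure R C φ) (N : ℤ) (M k : ℕ) {a : ℤ}
    (x : C a) :
    ∑ i ∈ range (k + 1), tildeSingle R C N M (φ (k - i) _ (φ i a x)) = 0 := by
  have hk := congrArg (tildeSingle R C N M) (LinearMap.congr_fun (hφ k a) x)
  simp only [LinearMap.sum_apply, LinearMap.comp_apply, map_sum, tildeSingle_gcast,
    LinearMap.zero_apply, map_zero] at hk
  rw [← sum_range_reflect, ← hk, ← sum_attach (range (k + 1))]
  refine sum_congr rfl fun i _ => ?_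
  have hi := mem_range.mp i.2
  rw [show k + 1 - 1 - i = k - i by omega, Nat.sub_sub_self (by omega)]

theorem tildeD_tildeD_tildeSingle (hφ : IsSOneStructure R C φ) (N : ℤ) (m : ℕ) {a : ℤ}
    (x : C a) : tildeD R C φ (N - 1) (tildeD R C φ N (tildeSingle R C N m x)) = 0 := by
  simp only [tildeD_tildeSingle, map_sum]
  calc ∑ j ∈ range (m + 1), ∑ i ∈ range (m - j + 1),
          tildeSingle R C (N - 1 - 1) (m - j - i) (φ i _ (φ j a x))
      = ∑ j ∈ range (m + 1), ∑ i ∈ range (m + 1 - j),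
          tildeSingle R C (N - 1 - 1) (m - j - i) (φ i _ (φ j a x)) :=
        sum_congr rfl fun j hj => by rw [Nat.sub_add_comm (Nat.lt_succ_iff.mp (mem_range.mp hj))]
    _ = ∑ k ∈ range (m + 1), ∑ i ∈ range (k + 1),
          tildeSingle R C (N - 1 - 1) (m - i - (k - i)) (φ (k - i) _ (φ i a x)) :=
        (sum_range_diag_flip _ fun j i => tildeSingle R C _ (m - j - i) (φ i _ (φ j a x))).symm
    _ = 0 := sum_eq_zero fun k _ => by
        rw [← sum_tildeSingle_phi_comp_phi hφ (N - 1 - 1) (m - k) k x]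
        refine sum_congr rfl fun i hi => ?_
        rw [show m - i - (k - i) = m - k by have := mem_range.mp hi; omega]

theorem tildeD_tildeD (hφ : IsSOneStructure R C φ) (N : ℤ) (x : Tilde C N) :
    tildeD R C φ (N - 1) (tildeD R C φ N x) = 0 := by
  suffices (tildeD R C φ (N - 1)).comp (tildeD R C φ N) = 0 from LinearMap.congr_fun this x
  refine DFinsupp.lhom_ext fun m y => ?_
  rw [LinearMap.comp_apply, ← tildeSingle_self (R := R), tildeD_tildeD_tildeSingle hφ,
    LinearMap.zero_apply]

theorem tildeD_tildeSingle_apply_of_le {N a : ℤ} {m ℓ : ℕ} (hm : m ≤ ℓ) (x : C a) :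
    tildeD R C φ N (tildeSingle R C N m x) ℓ = tildeSingle R C (N - 1) m (φ 0 a x) ℓ := by
  rw [tildeD_tildeSingle, DFinsupp.finsetSum_apply, sum_eq_single 0]
  · rfl
  · intro i hi hi0
    have := mem_range.mp hi
    exact tildeSingle_apply_of_ne (by omega) _
  · exact fun h => absurd (mem_range.mpr (Nat.succ_pos m)) h

theorem tildeD_apply_of_le {N : ℤ} {L ℓ : ℕ} {x : Tilde C N} (hx : ∀ ℓ, L < ℓ → x ℓ = 0)
    (hℓ : L ≤ ℓ) : tildeD R C φ N x ℓ = tildeSingle R C (N - 1) L (φ 0 _ (x L)) ℓ := by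
  classical
  conv_lhs => rw [← DFinsupp.sum_single (f := x)]
  rw [DFinsupp.sum, map_sum, DFinsupp.finsetSum_apply, sum_eq_single L]
  · rw [← tildeSingle_self (R := R), tildeD_tildeSingle_apply_of_le hℓ]
  · intro i hi hiL
    have hiL' : i ≤ L := not_lt.mp fun h => DFinsupp.mem_support_iff.mp hi (hx i h)
    rw [← tildeSingle_self (R := R), tildeD_tildeSingle_apply_of_le (hiL'.trans hℓ),
      tildeSingle_apply_of_ne (by omega)]
  · intro hL
    rw [DFinsupp.notMem_support_iff.mp hL, DFinsupp.single_zero, map_zero, DFinsupp.zero_apply]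

theorem exists_tildeD_apply_eq_of_le (hvan : PhiZeroExact R C φ) {N : ℤ} {L : ℕ}
    {x : Tilde C (N - 1)} (hx : ∀ ℓ, L < ℓ → x ℓ = 0) (hcyc : tildeD R C φ (N - 1) x = 0) :
    ∃ y : Tilde C N, ∀ ℓ, L ≤ ℓ → tildeD R C φ N y ℓ = x ℓ := by
  have htop : φ 0 _ (x L) = 0 := by
    have h := DFunLike.congr_fun hcyc L
    rwa [DFinsupp.zero_apply, tildeD_apply_of_le hx le_rfl, tildeSingle_apply_self (by omega),
      gcast_eq_zero_iff] at h
  obtain ⟨y, hy⟩ := hvan _ (x L) htop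
  refine ⟨tildeSingle R C N L y, fun ℓ hℓ => ?_⟩
  rw [tildeD_tildeSingle_apply_of_le hℓ]
  rcases hℓ.eq_or_lt with rfl | hLℓ
  · rw [tildeSingle_apply_self (by omega)]
    exact hy
  · rw [tildeSingle_apply_of_ne hLℓ.ne', hx ℓ hLℓ]

theorem exists_tildeD_eq_of_apply_eq_zero_of_le (hφ : IsSOneStructure R C φ)
    (hvan : PhiZeroExact R C φ) {N : ℤ} (L : ℕ) :
    ∀ x : Tilde C (N - 1), (∀ ℓ, L ≤ ℓ → x ℓ = 0) → tildeD R C φ (N - 1) x = 0 →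
      ∃ y : Tilde C N, tildeD R C φ N y = x := by
  induction L with
  | zero =>
    intro x hx _
    exact ⟨0, by rw [map_zero]; ext ℓ; exact (hx ℓ ℓ.zero_le).symm⟩
  | succ L ih =>
    intro x hx hcyc
    obtain ⟨y, hy⟩ := exists_tildeD_apply_eq_of_le hvan hx hcyc
    obtain ⟨y', hy'⟩ := ih (x - tildeD R C φ N y)
      (fun ℓ hℓ => by rw [DFinsupp.sub_apply, hy ℓ hℓ, sub_self])
      (by rw [map_sub, hcyc, tildeD_tildeD hφ, sub_self])
    exact ⟨y + y', by rw [map_add, hy', add_sub_cancel]⟩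

theorem exists_tildeD_eq_of_tildeD_eq_zero (hφ : IsSOneStructure R C φ)
    (hvan : PhiZeroExact R C φ) {N : ℤ} {x : Tilde C (N - 1)}
    (hx : tildeD R C φ (N - 1) x = 0) : ∃ y : Tilde C N, tildeD R C φ N y = x := by
  classical
  obtain ⟨L, hL⟩ := exists_nat_subset_range x.support
  refine exists_tildeD_eq_of_apply_eq_zero_of_le hφ hvan L x (fun ℓ hℓ => ?_) hx
  exact DFinsupp.notMem_support_iff.mp fun h => absurd (mem_range.mp (hL h)) (not_lt.mpr hℓ)

end

theorem sone_vanishing_implies_equivariant_vanishing (R : Type) [CommRing R] (C : ℤ → Type)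
    [∀ n, AddCommGroup (C n)] [∀ n, Module R (C n)]
    (φ : ∀ (i : ℕ) (n : ℤ), C n →ₗ[R] C (n + (2 * (i : ℤ) - 1)))
    (hφ : IsSOneStructure R C φ)
    (hvan : ∀ (n : ℤ) (x : C n), φ 0 n x = 0 →
      ∃ y : C (n + 1),
        gcast R C (show n + 1 + (2 * ((0 : ℕ) : ℤ) - 1) = n by push_cast; ring)
          (φ 0 (n + 1) y) = x) :
    ∀ (n : ℤ) (x : Tilde C n), tildeD R C φ n x = 0 →
      ∃ y : Tilde C (n + 1),
        gcast R (fun m => Tilde C m) (show n + 1 - 1 = n by ring) (tildeD R C φ (n + 1) y)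
          = x := by
  intro n x hx
  obtain ⟨y, hy⟩ := exists_tildeD_eq_of_tildeD_eq_zero hφ hvan (N := n + 1)
    (x := gcast R (fun m => Tilde C m) (show n = n + 1 - 1 by ring) x)
    (by rw [gcast_tildeD _ (by ring), hx, map_zero])
  exact ⟨y, by rw [hy, gcast_gcast]; rfl⟩
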